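/- arXiv:0710.5751 — 2 statements merged into one kernel-verified Lean document; each statement's English description precedes it below -/
import Mathlib

section
/- Let x ∈ Q(R) be dominant, fix a simple root α_{i₀}, and suppose z = y + (1/2)α_{i₀} lies in Q(R), where ⟨y, α_{i₀}^∨⟩ = 0, y is dominant, and ⟨y, ϖ_i⟩ ≤ ⟨x, ϖ_i⟩ for all i ∈ I. Then ⟨z, α_{i₀}^∨⟩ = 1, and z fails to be dominant if and only if there exists i₁ ∈ I \ {i₀} with ⟨α_{i₀}, α_{i₁}^∨⟩ < −1 and ⟨z, α_{i₁}^∨⟩ = −1; moreover such an i₁, if it exists, is unique, and ⟨z, α_i^∨⟩ ≥ 0 for all i ∈ I \ {i₁}. -/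
open Module

/-- An irreducible reduced (crystallographic) root system `R` in a real vector space `V`
(playing the role of `Q(R) ⊗ ℝ`), together with a base of simple roots indexed by `ι`,
the coroot pairings `u ↦ ⟨u, α^∨⟩` realised as linear functionals, and the fundamental
coweights `ϖ_i`, characterised by `⟨ϖ_i, α_j⟩ = δ_{ij}`. -/
structure RootSystemData (ι : Type*) (V : Type*) [Fintype ι] [DecidableEq ι]
    [AddCommGroup V] [Module ℝ V] where
  /-- the set of roots `R` -/
  isRoot : Set V
  /-- the coroot pairing: `coroot a u = ⟨u, a^∨⟩` -/
  coroot : V → (V →ₗ[ℝ] ℝ)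
  /-- the simple roots `α_i` -/
  sroot : ι → V
  sroot_mem : ∀ i, sroot i ∈ isRoot
  coroot_self : ∀ a ∈ isRoot, coroot a a = 2
  crystallographic : ∀ a ∈ isRoot, ∀ b ∈ isRoot, ∃ n : ℤ, coroot a b = (n : ℝ)
  reflect_mem : ∀ a ∈ isRoot, ∀ b ∈ isRoot, b - coroot a b • a ∈ isRoot
  reduced : ∀ a ∈ isRoot, ∀ t : ℝ, t • a ∈ isRoot → t = 1 ∨ t = -1
  finite : isRoot.Finite
  ne_zero : ∀ a ∈ isRoot, a ≠ 0
  span_top : Submodule.span ℝ isRoot = ⊤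
  /-- every root is a nonnegative or nonpositive integral combination of the simple roots -/
  base : ∀ a ∈ isRoot, (∃ c : ι → ℕ, a = ∑ i, (c i : ℝ) • sroot i) ∨
    (∃ c : ι → ℕ, a = -∑ i, (c i : ℝ) • sroot i)
  /-- the root system is irreducible -/
  irreducible : ∀ s t : Set V, isRoot = s ∪ t →
    (∀ a ∈ s, ∀ b ∈ t, coroot a b = 0) → s = ∅ ∨ t = ∅
  /-- the fundamental coweights `ϖ_i`, as linear functionals `u ↦ ⟨u, ϖ_i⟩` -/
  coweight : ι → (V →ₗ[ℝ] ℝ)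
  coweight_sroot : ∀ i j, coweight i (sroot j) = if i = j then 1 else 0

namespace RootSystemData

variable {ι V : Type*} [Fintype ι] [DecidableEq ι] [AddCommGroup V] [Module ℝ V]
variable (P : RootSystemData ι V)

/-- The root lattice `Q(R)`, i.e. the `ℤ`-span of the roots. -/
def rootLattice : AddSubgroup V := AddSubgroup.closure P.isRoot

/-- The Weyl group `W`, generated by the reflections in the roots. -/
def weylGroup : Subgroup (V ≃ₗ[ℝ] V) :=
  Subgroup.closure { w | ∃ a, ∃ ha : a ∈ P.isRoot, w = Module.reflection (P.coroot_self a ha) }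

/-- The Weyl orbit `O_x = {wx : w ∈ W}` of an element `x`. -/
def orbit (x : V) : Set V := { v | ∃ w ∈ P.weylGroup, v = w x }

/-- An element `u` is dominant if `⟨u, α_i^∨⟩ ≥ 0` for all `i ∈ I`. -/
def IsDominant (u : V) : Prop := ∀ i, 0 ≤ P.coroot (P.sroot i) u

/-- The simple reflection `s_{α_i}`. -/
def sref (i : ι) : V ≃ₗ[ℝ] V :=
  Module.reflection (P.coroot_self (P.sroot i) (P.sroot_mem i))

end RootSystemData

/-!
Pairing `z = y + ½ α_{i₀}` with `α_i^∨` gives `⟨y, α_i^∨⟩ + ½ ⟨α_{i₀}, α_i^∨⟩`, an integer since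
`z ∈ Q(R)`. As `⟨y, α_i^∨⟩ ≥ 0` and Cartan integers are at least `-3`, a negative value can only be
`-1`, and then `⟨α_{i₀}, α_i^∨⟩ ≤ -2`. Two distinct such `i`, `j` cannot exist: averaging over the
finite Weyl group gives a `W`-invariant inner product, for which `α_{i₀} + α_i + α_j` would have
nonpositive norm.
-/

open Module

theorem le_sub_one_of_lt_of_exists_intCast {x y : ℝ} (hx : ∃ m : ℤ, x = m)
    (hy : ∃ n : ℤ, y = n) (h : x < y) : x ≤ y - 1 := by
  obtain ⟨m, rfl⟩ := hx
  obtain ⟨n, rfl⟩ := hy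
  exact_mod_cast Int.le_sub_one_of_lt (by exact_mod_cast h)

section InvariantForm

variable {V : Type*} [AddCommGroup V] [Module ℝ V]

theorem exists_posDef_bilinForm [FiniteDimensional ℝ V] :
    ∃ B : LinearMap.BilinForm ℝ V, B.IsSymm ∧ ∀ v, v ≠ 0 → 0 < B v v := by
  let e := (finBasis ℝ V).equivFun
  refine ⟨(dotProductBilin ℝ ℝ).compl₁₂ e.toLinearMap e.toLinearMap, ⟨fun u v => ?_⟩,
    fun v hv => ?_⟩
  · simp [dotProduct_comm]
  · have he : e v ≠ 0 := e.map_ne_zero_iff.mpr hv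
    simp only [LinearMap.compl₁₂_apply, dotProductBilin_apply_apply, LinearEquiv.coe_coe]
    exact lt_of_le_of_ne (Finset.sum_nonneg fun i _ => mul_self_nonneg _)
      (Ne.symm (mt dotProduct_self_eq_zero.mp he))

theorem exists_posDef_bilinForm_invariant [FiniteDimensional ℝ V]
    (G : Subgroup (V ≃ₗ[ℝ] V)) [Finite G] :
    ∃ B : LinearMap.BilinForm ℝ V, B.IsSymm ∧ (∀ v, v ≠ 0 → 0 < B v v) ∧
      ∀ g ∈ G, ∀ u v, B (g u) (g v) = B u v := by
  have : Fintype G := Fintype.ofFinite G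
  obtain ⟨B₀, hsymm, hpos⟩ := exists_posDef_bilinForm (V := V)
  refine ⟨∑ g : G, B₀.compl₁₂ (g : V →ₗ[ℝ] V) (g : V →ₗ[ℝ] V), ⟨fun u v => ?_⟩,
    fun v hv => ?_, fun g hg u v => ?_⟩
  · simp [hsymm.eq (_ : V)]
  · simp only [LinearMap.BilinForm.sum_apply, LinearMap.compl₁₂_apply]
    exact Finset.sum_pos (fun g _ => hpos _ (g.1.map_ne_zero_iff.mpr hv)) Finset.univ_nonempty
  · simp only [LinearMap.BilinForm.sum_apply, LinearMap.compl₁₂_apply]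
    exact Fintype.sum_equiv (Equiv.mulRight ⟨g, hg⟩) _ _ fun k => rfl

theorem apply_mul_apply_self_eq_of_reflection_invariant {B : LinearMap.BilinForm ℝ V} {x : V}
    {f : Dual ℝ V} (h : f x = 2)
    (hB : ∀ u v, B (reflection h u) (reflection h v) = B u v) (v : V) :
    f v * B x x = 2 * B v x := by
  have := hB v x
  simp only [reflection_apply, h, map_sub, map_smul, LinearMap.sub_apply, LinearMap.smul_apply,
    smul_eq_mul] at this
  linarith

end InvariantForm

namespace RootSystemData

variable {ι V : Type*} [Fintype ι] [DecidableEq ι] [AddCommGroup V] [Module ℝ V]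
variable (P : RootSystemData ι V)

theorem mapsTo_isRoot_of_mem_weylGroup {g : V ≃ₗ[ℝ] V} (hg : g ∈ P.weylGroup) :
    Set.MapsTo g P.isRoot P.isRoot := by
  induction hg using Subgroup.closure_induction'' with
  | mem _ hx | inv_mem _ hx =>
    obtain ⟨a, ha, rfl⟩ := hx
    intro b hb
    simpa [reflection_inv, reflection_apply] using P.reflect_mem a ha b hb
  | one => exact Set.mapsTo_id _
  | mul _ _ _ _ hx hy => exact hx.comp hy

instance : Finite P.weylGroup := by
  have : Finite P.isRoot := P.finite
  refine Finite.of_injective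
    (fun g : P.weylGroup => (P.mapsTo_isRoot_of_mem_weylGroup g.2).restrict)
    fun g h hgh => Subtype.ext <| LinearEquiv.toLinearMap_injective <|
      LinearMap.ext_on P.span_top fun a ha => ?_
  simpa using congrArg Subtype.val (congrFun hgh ⟨a, ha⟩)

/-- An inner product for which every coroot is `a^∨ = 2a / (a, a)`. -/
structure IsInvariantForm (B : LinearMap.BilinForm ℝ V) : Prop where
  isSymm : B.IsSymm
  pos : ∀ v, v ≠ 0 → 0 < B v v
  coroot_mul : ∀ a ∈ P.isRoot, ∀ v, P.coroot a v * B a a = 2 * B v a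

theorem exists_isInvariantForm : ∃ B, P.IsInvariantForm B := by
  have : FiniteDimensional ℝ V := ⟨⟨P.finite.toFinset, by simpa using P.span_top⟩⟩
  obtain ⟨B, hsymm, hpos, hinv⟩ := exists_posDef_bilinForm_invariant P.weylGroup
  exact ⟨B, hsymm, hpos, fun a ha => apply_mul_apply_self_eq_of_reflection_invariant _
    (hinv _ (Subgroup.subset_closure ⟨a, ha, rfl⟩))⟩

theorem linearIndependent_sroot_pair {i j : ι} (hij : i ≠ j) :
    LinearIndependent ℝ ![P.sroot i, P.sroot j] := by
  rw [LinearIndependent.pair_iff]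
  intro s t hst
  exact ⟨by simpa [P.coweight_sroot, hij] using congrArg (P.coweight i) hst,
    by simpa [P.coweight_sroot, Ne.symm hij] using congrArg (P.coweight j) hst⟩

theorem coroot_sroot_nonpos {i j : ι} (hij : i ≠ j) :
    P.coroot (P.sroot i) (P.sroot j) ≤ 0 := by
  rcases P.base _ (P.reflect_mem _ (P.sroot_mem i) _ (P.sroot_mem j)) with ⟨c, hc⟩ | ⟨c, hc⟩
  · have hci : -P.coroot (P.sroot i) (P.sroot j) = c i := by
      simpa [P.coweight_sroot, hij] using congrArg (P.coweight i) hc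
    linarith [Nat.cast_nonneg (α := ℝ) (c i)]
  · have hcj : (1 : ℝ) = -c j := by
      simpa [P.coweight_sroot, Ne.symm hij] using congrArg (P.coweight j) hc
    linarith [Nat.cast_nonneg (α := ℝ) (c j)]

theorem exists_int_coroot_of_mem_rootLattice {a v : V} (ha : a ∈ P.isRoot)
    (hv : v ∈ P.rootLattice) : ∃ n : ℤ, P.coroot a v = n := by
  induction hv using AddSubgroup.closure_induction with
  | mem b hb => exact P.crystallographic a ha b hb
  | zero => exact ⟨0, by simp⟩
  | add u w _ _ hu hw =>
    obtain ⟨m, hm⟩ := hu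
    obtain ⟨n, hn⟩ := hw
    exact ⟨m + n, by simp [hm, hn]⟩
  | neg u _ hu =>
    obtain ⟨m, hm⟩ := hu
    exact ⟨-m, by simp [hm]⟩

namespace IsInvariantForm

variable {P} {B : LinearMap.BilinForm ℝ V} {a b : V}

theorem coroot_neg_of_neg (hB : P.IsInvariantForm B) (ha : a ∈ P.isRoot) (hb : b ∈ P.isRoot)
    (h : P.coroot a b < 0) : P.coroot b a < 0 := by
  have hab := hB.coroot_mul a ha b
  have hba := hB.coroot_mul b hb a
  rw [hB.isSymm.eq a] at hba
  have := hB.pos a (P.ne_zero a ha)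
  have := hB.pos b (P.ne_zero b hb)
  have hBab : B b a < 0 := by nlinarith
  nlinarith

theorem coroot_le_neg_one_of_neg (hB : P.IsInvariantForm B) (ha : a ∈ P.isRoot)
    (hb : b ∈ P.isRoot) (h : P.coroot a b < 0) : P.coroot b a ≤ -1 := by
  simpa using le_sub_one_of_lt_of_exists_intCast (P.crystallographic b hb a ha) ⟨0, by simp⟩
    (hB.coroot_neg_of_neg ha hb h)

theorem coroot_mul_coroot_lt_four (hB : P.IsInvariantForm B) (ha : a ∈ P.isRoot)
    (hb : b ∈ P.isRoot) (hind : LinearIndependent ℝ ![a, b]) :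
    P.coroot a b * P.coroot b a < 4 := by
  have hcs := (B.apply_sq_lt_iff_linearIndependent_of_symm hB.pos
    (LinearMap.BilinForm.isSymm_iff.mp hB.isSymm) a b).mpr hind
  have hab := hB.coroot_mul a ha b
  have hba := hB.coroot_mul b hb a
  rw [hB.isSymm.eq b] at hab
  have hprod : P.coroot a b * P.coroot b a * (B a a * B b b) = 4 * B a b ^ 2 := by
    linear_combination (P.coroot b a * B b b) * hab + 2 * B a b * hba
  nlinarith [mul_pos (hB.pos a (P.ne_zero a ha)) (hB.pos b (P.ne_zero b hb))]

theorem four_mul_apply_add_le (hB : P.IsInvariantForm B) (ha : a ∈ P.isRoot)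
    (hb : b ∈ P.isRoot) (h : P.coroot b a < -1) : 4 * B a b + 2 * B b b + B a a ≤ 0 := by
  have hc := le_sub_one_of_lt_of_exists_intCast (P.crystallographic b hb a ha) ⟨-1, by simp⟩ h
  have hd := hB.coroot_le_neg_one_of_neg hb ha (by linarith)
  have hab := hB.coroot_mul a ha b
  have hba := hB.coroot_mul b hb a
  rw [hB.isSymm.eq b] at hab
  have := hB.pos a (P.ne_zero a ha)
  have := hB.pos b (P.ne_zero b hb)
  nlinarith

end IsInvariantForm

theorem neg_three_le_coroot {a b : V} (ha : a ∈ P.isRoot) (hb : b ∈ P.isRoot)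
    (hind : LinearIndependent ℝ ![a, b]) : -3 ≤ P.coroot a b := by
  obtain ⟨B, hB⟩ := P.exists_isInvariantForm
  by_contra! h
  have hc := le_sub_one_of_lt_of_exists_intCast (P.crystallographic a ha b hb) ⟨-3, by simp⟩ h
  have hd := hB.coroot_le_neg_one_of_neg ha hb (by linarith)
  nlinarith [hB.coroot_mul_coroot_lt_four ha hb hind]

theorem eq_of_coroot_sroot_lt_neg_one {i j k : ι}
    (hj : P.coroot (P.sroot j) (P.sroot i) < -1) (hk : P.coroot (P.sroot k) (P.sroot i) < -1) :
    j = k := by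
  by_contra hjk
  obtain ⟨B, hB⟩ := P.exists_isInvariantForm
  have hBjk : B (P.sroot j) (P.sroot k) ≤ 0 := by
    have := hB.coroot_mul _ (P.sroot_mem j) (P.sroot k)
    nlinarith [P.coroot_sroot_nonpos hjk, hB.pos _ (P.ne_zero _ (P.sroot_mem j)),
      hB.isSymm.eq (P.sroot j) (P.sroot k)]
  have hsum : P.sroot i + P.sroot j + P.sroot k ≠ 0 := by
    intro h
    have hj := congrArg (P.coweight j) h
    simp only [map_add, P.coweight_sroot, if_neg hjk, map_zero] at hj
    split_ifs at hj <;> norm_num at hj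
  have hpos := hB.pos _ hsum
  simp only [map_add, LinearMap.add_apply, hB.isSymm.eq (P.sroot j) (P.sroot i),
    hB.isSymm.eq (P.sroot k) (P.sroot i), hB.isSymm.eq (P.sroot k) (P.sroot j)] at hpos
  linarith [hB.four_mul_apply_add_le (P.sroot_mem i) (P.sroot_mem j) hj,
    hB.four_mul_apply_add_le (P.sroot_mem i) (P.sroot_mem k) hk]

theorem coroot_sroot_eq_neg_one_of_neg {y z : V} {i₀ i : ι}
    (hz : z = y + (1 / 2 : ℝ) • P.sroot i₀) (hzQ : z ∈ P.rootLattice)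
    (hy : 0 ≤ P.coroot (P.sroot i) y) (hi : i ≠ i₀) (hneg : P.coroot (P.sroot i) z < 0) :
    P.coroot (P.sroot i) (P.sroot i₀) < -1 ∧ P.coroot (P.sroot i) z = -1 := by
  have hzi : P.coroot (P.sroot i) z =
      P.coroot (P.sroot i) y + 1 / 2 * P.coroot (P.sroot i) (P.sroot i₀) := by
    rw [hz, map_add, map_smul, smul_eq_mul]
  have hcartan := P.neg_three_le_coroot (P.sroot_mem i) (P.sroot_mem i₀)
    (P.linearIndependent_sroot_pair hi)
  have hint := P.exists_int_coroot_of_mem_rootLattice (P.sroot_mem i) hzQ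
  have hle := le_sub_one_of_lt_of_exists_intCast hint ⟨0, by simp⟩ hneg
  have hge := le_sub_one_of_lt_of_exists_intCast (x := -2) ⟨-2, by simp⟩ hint (by linarith)
  constructor <;> linarith

end RootSystemData

theorem statement6_general {ι V : Type*} [Fintype ι] [DecidableEq ι] [AddCommGroup V] [Module ℝ V]
    (P : RootSystemData ι V) (y z : V) (i₀ : ι)
    (hz : z = y + (1 / 2 : ℝ) • P.sroot i₀) (hzQ : z ∈ P.rootLattice)
    (h1 : P.coroot (P.sroot i₀) y = 0)
    (h2 : P.IsDominant y) :
    P.coroot (P.sroot i₀) z = 1 ∧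
    (¬ P.IsDominant z ↔ ∃ i₁, i₁ ≠ i₀ ∧
      P.coroot (P.sroot i₁) (P.sroot i₀) < -1 ∧ P.coroot (P.sroot i₁) z = -1) ∧
    (∀ i₁ i₁', (i₁ ≠ i₀ ∧ P.coroot (P.sroot i₁) (P.sroot i₀) < -1 ∧
        P.coroot (P.sroot i₁) z = -1) →
      (i₁' ≠ i₀ ∧ P.coroot (P.sroot i₁') (P.sroot i₀) < -1 ∧
        P.coroot (P.sroot i₁') z = -1) → i₁ = i₁') ∧
    (∀ i₁, (i₁ ≠ i₀ ∧ P.coroot (P.sroot i₁) (P.sroot i₀) < -1 ∧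
        P.coroot (P.sroot i₁) z = -1) →
      ∀ i, i ≠ i₁ → 0 ≤ P.coroot (P.sroot i) z) := by
  have hz₀ : P.coroot (P.sroot i₀) z = 1 := by
    rw [hz, map_add, map_smul, h1, P.coroot_self _ (P.sroot_mem i₀)]
    norm_num
  have hneg (i : ι) (hi : P.coroot (P.sroot i) z < 0) :
      i ≠ i₀ ∧ P.coroot (P.sroot i) (P.sroot i₀) < -1 ∧ P.coroot (P.sroot i) z = -1 := by
    have hi₀ : i ≠ i₀ := by
      rintro rfl
      linarith
    exact ⟨hi₀, P.coroot_sroot_eq_neg_one_of_neg hz hzQ (h2 i) hi₀ hi⟩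
  refine ⟨hz₀, ⟨fun hnd => ?_, ?_⟩,
    fun i₁ i₁' h h' => P.eq_of_coroot_sroot_lt_neg_one h.2.1 h'.2.1, ?_⟩
  · obtain ⟨i, hi⟩ : ∃ i, P.coroot (P.sroot i) z < 0 := by
      simpa [RootSystemData.IsDominant] using hnd
    exact ⟨i, hneg i hi⟩
  · rintro ⟨i₁, -, -, hi₁⟩ hdom
    linarith [hdom i₁]
  · rintro i₁ ⟨-, hi₁, -⟩ i hi
    by_contra! hi'
    exact hi (P.eq_of_coroot_sroot_lt_neg_one (hneg i hi').2.1 hi₁)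

/-- With `x, y, z, i₀` as in Lemma 1.1: `⟨z, α_{i₀}^∨⟩ = 1`, and `z` fails
to be dominant iff there exists `i₁ ∈ I \ {i₀}` with `⟨α_{i₀}, α_{i₁}^∨⟩ < −1` and
`⟨z, α_{i₁}^∨⟩ = −1`; such an `i₁`, if it exists, is unique, and `⟨z, α_i^∨⟩ ≥ 0` for all
`i ∈ I \ {i₁}`. -/
theorem statement6 {ι V : Type*} [Fintype ι] [DecidableEq ι] [AddCommGroup V] [Module ℝ V]
    (P : RootSystemData ι V) (x y z : V) (i₀ : ι)
    (hx : x ∈ P.rootLattice) (hxdom : P.IsDominant x)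
    (hz : z = y + (1 / 2 : ℝ) • P.sroot i₀) (hzQ : z ∈ P.rootLattice)
    (h1 : P.coroot (P.sroot i₀) y = 0)
    (h2 : P.IsDominant y)
    (h3 : ∀ i, P.coweight i y ≤ P.coweight i x) :
    P.coroot (P.sroot i₀) z = 1 ∧
    (¬ P.IsDominant z ↔ ∃ i₁, i₁ ≠ i₀ ∧
      P.coroot (P.sroot i₁) (P.sroot i₀) < -1 ∧ P.coroot (P.sroot i₁) z = -1) ∧
    (∀ i₁ i₁', (i₁ ≠ i₀ ∧ P.coroot (P.sroot i₁) (P.sroot i₀) < -1 ∧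
        P.coroot (P.sroot i₁) z = -1) →
      (i₁' ≠ i₀ ∧ P.coroot (P.sroot i₁') (P.sroot i₀) < -1 ∧
        P.coroot (P.sroot i₁') z = -1) → i₁ = i₁') ∧
    (∀ i₁, (i₁ ≠ i₀ ∧ P.coroot (P.sroot i₁) (P.sroot i₀) < -1 ∧
        P.coroot (P.sroot i₁) z = -1) →
      ∀ i, i ≠ i₁ → 0 ≤ P.coroot (P.sroot i) z) :=
  statement6_general P y z i₀ hz hzQ h1 h2
end

section
/- Suppose R is simply laced, i.e. ⟨α_i, α_j^∨⟩ ≥ −1 for all distinct i, j ∈ I. Let x ∈ Q(R) be dominant, fix a simple root α_{i₀}, and suppose z = y + (1/2)α_{i₀} lies in Q(R), where ⟨y, α_{i₀}^∨⟩ = 0, y is dominant, and ⟨y, ϖ_i⟩ ≤ ⟨x, ϖ_i⟩ for all i ∈ I. Then z is dominant, and consequently z ∈ Conv(O_x). -/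
open Module

/-! Dominance of `z` is integrality: for `i ≠ i₀` the pairing `⟨z, α_i^∨⟩` is an integer that the
simply-laced bound makes `≥ -1/2`, and `⟨z, ϖ_{i₀}⟩ = ⟨y, ϖ_{i₀}⟩ + 1/2` is an integer
`< ⟨x, ϖ_{i₀}⟩ + 1`, so `x - z` is a nonnegative combination of simple roots.

Such a dominant `z` lies in `Conv(O_x)`: given a functional `g`, let `w ∈ W` maximise `g` on the
orbit of the strictly dominant `z + δρ` (`ρ` the sum of the positive roots). Comparing with
`w s_i (z + δρ)` gives `g (w α_i) ≥ 0` for all `i`, hence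
`g z + δ g ρ ≤ g (w z) + δ g (w ρ) ≤ g (w x) + δ g (w ρ)`, and letting `δ → 0` shows that no
functional separates `z` from `O_x`. -/

theorem mem_convexHull_of_forall_exists_le {E : Type*} [AddCommGroup E] [Module ℝ E]
    [FiniteDimensional ℝ E] {s : Set E} (hs : s.Finite) {z : E}
    (h : ∀ g : E →ₗ[ℝ] ℝ, ∃ x ∈ s, g z ≤ g x) : z ∈ convexHull ℝ s := by
  by_contra hz
  -- separate in a coordinate space, where the topology is available
  let e := (Module.finBasis ℝ E).equivFun
  have hez : e z ∉ convexHull ℝ (e '' s) := by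
    rw [show e '' s = e.toLinearMap '' s from rfl, ← LinearMap.image_convexHull]
    rintro ⟨v, hv, hev⟩
    exact hz (e.injective hev ▸ hv)
  obtain ⟨f, u, hfs, hfz⟩ := geometric_hahn_banach_closed_point (convex_convexHull ℝ _)
    ((hs.image e).isClosed_convexHull ℝ) hez
  obtain ⟨x, hx, hzx⟩ := h (f.toLinearMap ∘ₗ e.toLinearMap)
  exact (hfs _ (subset_convexHull ℝ _ ⟨x, hx, rfl⟩)).not_ge (hfz.le.trans hzx)

namespace RootSystemData

variable {ι V : Type*} [Fintype ι] [DecidableEq ι] [AddCommGroup V] [Module ℝ V]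
variable (P : RootSystemData ι V)

section SimpleRoots

lemma span_sroot_eq_top : Submodule.span ℝ (Set.range P.sroot) = ⊤ := by
  rw [← top_le_iff, ← P.span_top, Submodule.span_le]
  intro a ha
  have hmem : ∀ c : ι → ℕ, ∑ i, (c i : ℝ) • P.sroot i ∈ Submodule.span ℝ (Set.range P.sroot) :=
    fun c => Submodule.sum_mem _ fun i _ => Submodule.smul_mem _ _ (Submodule.subset_span ⟨i, rfl⟩)
  rcases P.base a ha with ⟨c, rfl⟩ | ⟨c, rfl⟩
  · exact hmem c
  · exact Submodule.neg_mem _ (hmem c)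

lemma coweight_sum_smul_sroot (c : ι → ℝ) (k : ι) :
    P.coweight k (∑ i, c i • P.sroot i) = c k := by
  simp [P.coweight_sroot]

lemma linearIndependent_sroot : LinearIndependent ℝ P.sroot := by
  refine Fintype.linearIndependent_iff.2 fun c hc k => ?_
  simpa [P.coweight_sum_smul_sroot] using congrArg (P.coweight k) hc

noncomputable def simpleBasis : Module.Basis ι ℝ V :=
  .mk P.linearIndependent_sroot P.span_sroot_eq_top.ge

lemma coe_simpleBasis : ⇑P.simpleBasis = P.sroot := Module.Basis.coe_mk _ _

lemma simpleBasis_coord (i : ι) : P.simpleBasis.coord i = P.coweight i :=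
  P.simpleBasis.ext fun j => by
    rw [Module.Basis.coord_apply, Module.Basis.repr_self, P.coe_simpleBasis, P.coweight_sroot,
      Finsupp.single_apply]
    simp only [@eq_comm _ j]

lemma sum_coweight_smul_sroot (v : V) : ∑ i, P.coweight i v • P.sroot i = v := by
  simpa [← Module.Basis.coord_apply, P.simpleBasis_coord, P.coe_simpleBasis] using
    P.simpleBasis.sum_repr v

lemma exists_nat_coweight_eq {a : V} (ha : a ∈ P.isRoot) :
    ∃ c : ι → ℕ, (∀ k, P.coweight k a = c k) ∨ (∀ k, P.coweight k a = -c k) := by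
  rcases P.base a ha with ⟨c, rfl⟩ | ⟨c, rfl⟩
  · exact ⟨c, .inl fun k => P.coweight_sum_smul_sroot _ k⟩
  · exact ⟨c, .inr fun k => by rw [map_neg, P.coweight_sum_smul_sroot]⟩

end SimpleRoots

section Integrality

lemma exists_int_eq_of_mem_rootLattice (φ : V →ₗ[ℝ] ℝ)
    (hφ : ∀ a ∈ P.isRoot, ∃ n : ℤ, φ a = n) {v : V} (hv : v ∈ P.rootLattice) :
    ∃ n : ℤ, φ v = n := by
  have hle : P.rootLattice ≤ (Int.castAddHom ℝ).range.comap φ.toAddMonoidHom :=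
    (AddSubgroup.closure_le _).2 fun a ha => by
      obtain ⟨n, hn⟩ := hφ a ha
      exact ⟨n, hn.symm⟩
  obtain ⟨n, hn⟩ := hle hv
  exact ⟨n, hn.symm⟩

lemma exists_int_coweight_eq (k : ι) {v : V} (hv : v ∈ P.rootLattice) :
    ∃ n : ℤ, P.coweight k v = n := by
  refine P.exists_int_eq_of_mem_rootLattice _ (fun a ha => ?_) hv
  obtain ⟨c, hc | hc⟩ := P.exists_nat_coweight_eq ha
  · exact ⟨c k, by rw [hc]; norm_cast⟩
  · exact ⟨-c k, by rw [hc]; norm_cast⟩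

lemma exists_int_coroot_eq (i : ι) {v : V} (hv : v ∈ P.rootLattice) :
    ∃ n : ℤ, P.coroot (P.sroot i) v = n :=
  P.exists_int_eq_of_mem_rootLattice _ (P.crystallographic _ (P.sroot_mem i)) hv

end Integrality

section WeylGroup

lemma sref_apply (i : ι) (v : V) :
    P.sref i v = v - P.coroot (P.sroot i) v • P.sroot i :=
  Module.reflection_apply _ _

lemma sref_sref (i : ι) (v : V) : P.sref i (P.sref i v) = v :=
  Module.involutive_reflection _ v

lemma coroot_sref (i : ι) (v : V) :
    P.coroot (P.sroot i) (P.sref i v) = -P.coroot (P.sroot i) v := by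
  rw [sref_apply, map_sub, map_smul, P.coroot_self _ (P.sroot_mem i), smul_eq_mul]
  ring

lemma coweight_sref_of_ne {i j : ι} (hji : j ≠ i) (v : V) :
    P.coweight j (P.sref i v) = P.coweight j v := by
  simp [sref_apply, P.coweight_sroot, hji]

lemma sref_mem_weylGroup (i : ι) : P.sref i ∈ P.weylGroup :=
  Subgroup.subset_closure ⟨P.sroot i, P.sroot_mem i, rfl⟩

lemma mapsTo_weylGroup {w : V ≃ₗ[ℝ] V} (hw : w ∈ P.weylGroup) :
    Set.MapsTo w P.isRoot P.isRoot := by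
  have hgen : ∀ {a : V} (ha : a ∈ P.isRoot),
      Set.MapsTo (Module.reflection (P.coroot_self a ha)) P.isRoot P.isRoot :=
    fun ha b hb => by rw [Module.reflection_apply]; exact P.reflect_mem _ ha b hb
  induction hw using Subgroup.closure_induction'' with
  | mem _ h => obtain ⟨a, ha, rfl⟩ := h; exact hgen ha
  | inv_mem _ h => obtain ⟨a, ha, rfl⟩ := h; exact hgen ha
  | one => exact Set.mapsTo_id _
  | mul _ _ _ _ hx hy => exact hx.comp hy

lemma weylGroup_finite : (P.weylGroup : Set (V ≃ₗ[ℝ] V)).Finite := by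
  have : Finite P.isRoot := P.finite
  refine Set.Finite.of_finite_image (f := fun w (a : P.isRoot) => w a)
    ((Set.Finite.pi (t := fun _ => P.isRoot) fun _ => P.finite).subset ?_)
    fun w₁ _ w₂ _ h => ?_
  · rintro _ ⟨w, hw, rfl⟩ a -
    exact P.mapsTo_weylGroup hw a.2
  · exact LinearEquiv.toLinearMap_injective <|
      LinearMap.ext_on P.span_top fun a ha => congrFun h ⟨a, ha⟩

lemma orbit_finite (v : V) : (P.orbit v).Finite := by
  refine (P.weylGroup_finite.image fun w => w v).subset ?_
  rintro _ ⟨w, hw, rfl⟩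
  exact ⟨w, hw, rfl⟩

lemma mem_orbit_self (v : V) : v ∈ P.orbit v := ⟨1, one_mem _, rfl⟩

end WeylGroup

section PositiveRoots

def posRoots : Set V := {a | a ∈ P.isRoot ∧ ∀ k, 0 ≤ P.coweight k a}

lemma posRoots_finite : P.posRoots.Finite := P.finite.subset fun _ ha => ha.1

noncomputable def rho : V := ∑ a ∈ P.posRoots_finite.toFinset, a

lemma sroot_mem_posRoots (i : ι) : P.sroot i ∈ P.posRoots :=
  ⟨P.sroot_mem i, fun k => by rw [P.coweight_sroot]; split_ifs <;> norm_num⟩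

lemma coweight_nonpos_of_notMem_posRoots {a : V} (ha : a ∈ P.isRoot) (hpos : a ∉ P.posRoots)
    (k : ι) : P.coweight k a ≤ 0 := by
  obtain ⟨c, hc | hc⟩ := P.exists_nat_coweight_eq ha
  · exact absurd ⟨ha, fun k => by rw [hc]; positivity⟩ hpos
  · rw [hc]; simp

lemma exists_coweight_pos_of_ne_sroot {a : V} {i : ι} (ha : a ∈ P.posRoots)
    (hne : a ≠ P.sroot i) : ∃ j ≠ i, 0 < P.coweight j a := by
  by_contra! hle
  have hsupp : ∀ j ≠ i, P.coweight j a = 0 := fun j hj => (hle j hj).antisymm (ha.2 j)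
  have hai : a = P.coweight i a • P.sroot i := by
    conv_lhs => rw [← P.sum_coweight_smul_sroot a]
    exact Finset.sum_eq_single i (fun j _ hj => by rw [hsupp j hj, zero_smul]) (by simp)
  rcases P.reduced _ (P.sroot_mem i) _ (hai ▸ ha.1) with h | h
  · exact hne (by rw [hai, h, one_smul])
  · linarith [ha.2 i]

lemma mapsTo_sref_posRoots_diff (i : ι) :
    Set.MapsTo (P.sref i) (P.posRoots \ {P.sroot i}) (P.posRoots \ {P.sroot i}) := by
  rintro a ⟨ha, hne⟩
  obtain ⟨j, hji, hj⟩ := P.exists_coweight_pos_of_ne_sroot ha hne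
  have hj' : 0 < P.coweight j (P.sref i a) := by rwa [P.coweight_sref_of_ne hji]
  have hroot : P.sref i a ∈ P.isRoot := by
    rw [sref_apply]; exact P.reflect_mem _ (P.sroot_mem i) a ha.1
  refine ⟨?_, fun heq => ?_⟩
  · by_contra hpos
    exact (P.coweight_nonpos_of_notMem_posRoots hroot hpos j).not_gt hj'
  · rw [Set.mem_singleton_iff.1 heq, P.coweight_sroot, if_neg hji] at hj'
    exact lt_irrefl _ hj'

lemma coroot_sroot_rho (i : ι) : P.coroot (P.sroot i) P.rho = 2 := by
  classical
  set c := P.coroot (P.sroot i)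
  set T := P.posRoots_finite.toFinset.erase (P.sroot i)
  have hT : ∀ a ∈ T, P.sref i a ∈ T := fun a ha => by
    simpa [T, and_comm] using P.mapsTo_sref_posRoots_diff i (by simpa [T, and_comm] using ha)
  -- `s_i` permutes the positive roots other than `α_i` and negates their pairing with `α_i^∨`
  have hsum : ∑ a ∈ T, c a = 0 := by
    have h := Finset.sum_nbij' (f := c) (g := fun a => -c a) (P.sref i) (P.sref i) hT hT
      (fun a _ => P.sref_sref i a) (fun a _ => P.sref_sref i a)
      (fun a _ => by simp only [c, P.coroot_sref, neg_neg])
    rw [Finset.sum_neg_distrib] at h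
    linarith
  rw [rho, ← Finset.add_sum_erase _ _ (by simpa using P.sroot_mem_posRoots i), map_add, map_sum,
    hsum, P.coroot_self _ (P.sroot_mem i), add_zero]

end PositiveRoots

section ConvexHull

lemma apply_le_apply_of_coweight_le (f : V →ₗ[ℝ] ℝ) (hf : ∀ i, 0 ≤ f (P.sroot i)) {x z : V}
    (hle : ∀ i, P.coweight i z ≤ P.coweight i x) : f z ≤ f x := by
  rw [← sub_nonneg, ← map_sub, ← P.sum_coweight_smul_sroot (x - z), map_sum]
  refine Finset.sum_nonneg fun i _ => ?_
  rw [map_smul, smul_eq_mul, map_sub]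
  exact mul_nonneg (sub_nonneg.2 (hle i)) (hf i)

lemma exists_weyl_apply_sroot_nonneg (g : V →ₗ[ℝ] ℝ) {v : V}
    (hv : ∀ i, 0 < P.coroot (P.sroot i) v) :
    ∃ w ∈ P.weylGroup, g v ≤ g (w v) ∧ ∀ i, 0 ≤ g (w (P.sroot i)) := by
  obtain ⟨_, ⟨w, hw, rfl⟩, hmax⟩ :=
    (P.orbit v).exists_max_image g (P.orbit_finite v) ⟨v, P.mem_orbit_self v⟩
  refine ⟨w, hw, hmax v (P.mem_orbit_self v), fun i => ?_⟩
  have h := hmax _ ⟨w * P.sref i, mul_mem hw (P.sref_mem_weylGroup i), rfl⟩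
  rw [LinearEquiv.mul_apply, sref_apply, map_sub, map_smul, map_sub, map_smul, smul_eq_mul] at h
  exact nonneg_of_mul_nonneg_right (by linarith) (hv i)

lemma exists_mem_orbit_apply_ge (g : V →ₗ[ℝ] ℝ) {x z : V} (hz : P.IsDominant z)
    (hle : ∀ i, P.coweight i z ≤ P.coweight i x) : ∃ x' ∈ P.orbit x, g z ≤ g x' := by
  obtain ⟨x₀, hx₀, hmaxx⟩ :=
    (P.orbit x).exists_max_image g (P.orbit_finite x) ⟨x, P.mem_orbit_self x⟩
  obtain ⟨r, -, hmaxr⟩ :=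
    (P.orbit P.rho).exists_max_image g (P.orbit_finite _) ⟨_, P.mem_orbit_self _⟩
  refine ⟨x₀, hx₀, le_of_forall_pos_le_add fun ε hε => ?_⟩
  set C := g r - g P.rho
  have hC : 0 ≤ C := sub_nonneg.2 (hmaxr _ (P.mem_orbit_self _))
  set δ := ε / (C + 1)
  have hδ : 0 < δ := by positivity
  have hδC : δ * C ≤ ε := by
    have : δ * (C + 1) = ε := div_mul_cancel₀ _ (by positivity)
    nlinarith
  obtain ⟨w, hw, hgv, hwpos⟩ :=
    P.exists_weyl_apply_sroot_nonneg g (v := z + δ • P.rho) fun i => by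
      rw [map_add, map_smul, P.coroot_sroot_rho, smul_eq_mul]
      linarith [hz i]
  have hzx : g (w z) ≤ g (w x) :=
    P.apply_le_apply_of_coweight_le (g ∘ₗ w.toLinearMap) hwpos hle
  have hx : g (w x) ≤ g x₀ := hmaxx _ ⟨w, hw, rfl⟩
  have hρ : δ * g (w P.rho) ≤ δ * g r := mul_le_mul_of_nonneg_left (hmaxr _ ⟨w, hw, rfl⟩) hδ.le
  simp only [map_add, map_smul, smul_eq_mul] at hgv
  linarith

lemma mem_convexHull_orbit_of_isDominant {x z : V} (hz : P.IsDominant z)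
    (hle : ∀ i, P.coweight i z ≤ P.coweight i x) : z ∈ convexHull ℝ (P.orbit x) :=
  have := Module.Finite.of_basis P.simpleBasis
  mem_convexHull_of_forall_exists_le (P.orbit_finite x) fun g =>
    P.exists_mem_orbit_apply_ge g hz hle

end ConvexHull

variable {y : V} {i₀ : ι}

lemma isDominant_add_half_smul_sroot
    (hsl : ∀ i ≠ i₀, -1 ≤ P.coroot (P.sroot i) (P.sroot i₀)) (hy : P.IsDominant y)
    (hy₀ : P.coroot (P.sroot i₀) y = 0) (hQ : y + (1 / 2 : ℝ) • P.sroot i₀ ∈ P.rootLattice) :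
    P.IsDominant (y + (1 / 2 : ℝ) • P.sroot i₀) := by
  intro i
  have hval : P.coroot (P.sroot i) (y + (1 / 2 : ℝ) • P.sroot i₀) =
      P.coroot (P.sroot i) y + 1 / 2 * P.coroot (P.sroot i) (P.sroot i₀) := by
    rw [map_add, map_smul, smul_eq_mul]
  rcases eq_or_ne i i₀ with rfl | hi
  · rw [hval, hy₀, P.coroot_self _ (P.sroot_mem i)]
    norm_num
  · -- an integer that is at least `-1/2`
    obtain ⟨n, hn⟩ := P.exists_int_coroot_eq i hQ
    have hn' : (-1 : ℝ) < n := by linarith [hy i, hsl i hi]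
    have : (-1 : ℤ) < n := by exact_mod_cast hn'
    rw [hn]
    exact_mod_cast (by omega : 0 ≤ n)

lemma coweight_add_half_smul_sroot_le {x : V} (hx : x ∈ P.rootLattice)
    (hQ : y + (1 / 2 : ℝ) • P.sroot i₀ ∈ P.rootLattice)
    (hle : ∀ i, P.coweight i y ≤ P.coweight i x) (i : ι) :
    P.coweight i (y + (1 / 2 : ℝ) • P.sroot i₀) ≤ P.coweight i x := by
  have hval : P.coweight i (y + (1 / 2 : ℝ) • P.sroot i₀) =
      P.coweight i y + if i = i₀ then 1 / 2 else 0 := by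
    simp [P.coweight_sroot]
  rcases eq_or_ne i i₀ with rfl | hi
  · obtain ⟨m, hm⟩ := P.exists_int_coweight_eq i hQ
    obtain ⟨n, hn⟩ := P.exists_int_coweight_eq i hx
    have hmn' : (m : ℝ) < n + 1 := by
      rw [← hm, ← hn, hval, if_pos rfl]
      linarith [hle i]
    have : m < n + 1 := by exact_mod_cast hmn'
    rw [hm, hn]
    exact_mod_cast (by omega : m ≤ n)
  · rw [hval, if_neg hi, add_zero]
    exact hle i

end RootSystemData

theorem statement7_general {ι V : Type*} [Fintype ι] [DecidableEq ι] [AddCommGroup V] [Module ℝ V]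
    (P : RootSystemData ι V)
    (hsl : ∀ i j : ι, i ≠ j → -1 ≤ P.coroot (P.sroot j) (P.sroot i))
    (x y z : V) (i₀ : ι)
    (hx : x ∈ P.rootLattice)
    (hz : z = y + (1 / 2 : ℝ) • P.sroot i₀) (hzQ : z ∈ P.rootLattice)
    (h1 : P.coroot (P.sroot i₀) y = 0)
    (h2 : P.IsDominant y)
    (h3 : ∀ i, P.coweight i y ≤ P.coweight i x) :
    P.IsDominant z ∧ z ∈ convexHull ℝ (P.orbit x) := by
  subst hz
  have hzdom := P.isDominant_add_half_smul_sroot (fun i hi => hsl i₀ i hi.symm) h2 h1 hzQ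
  exact ⟨hzdom,
    P.mem_convexHull_orbit_of_isDominant hzdom (P.coweight_add_half_smul_sroot_le hx hzQ h3)⟩

/-- Suppose `R` is simply laced, i.e. `⟨α_i, α_j^∨⟩ ≥ −1` for all distinct
`i, j ∈ I`. With `x, y, z, i₀` as in Lemma 1.1, `z` is dominant, and consequently
`z ∈ Conv(O_x)`. -/
theorem statement7 {ι V : Type*} [Fintype ι] [DecidableEq ι] [AddCommGroup V] [Module ℝ V]
    (P : RootSystemData ι V)
    (hsl : ∀ i j : ι, i ≠ j → -1 ≤ P.coroot (P.sroot j) (P.sroot i))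
    (x y z : V) (i₀ : ι)
    (hx : x ∈ P.rootLattice) (hxdom : P.IsDominant x)
    (hz : z = y + (1 / 2 : ℝ) • P.sroot i₀) (hzQ : z ∈ P.rootLattice)
    (h1 : P.coroot (P.sroot i₀) y = 0)
    (h2 : P.IsDominant y)
    (h3 : ∀ i, P.coweight i y ≤ P.coweight i x) :
    P.IsDominant z ∧ z ∈ convexHull ℝ (P.orbit x) :=
  statement7_general P hsl x y z i₀ hx hz hzQ h1 h2 h3
end
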